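/- Suppose η* : Ω → ℝ is strictly convex on a convex open set Ω ⊆ ℝ², η*(Ū) = 0, ∇η*(Ū) = 0, and G : Ω → ℝ² satisfies ∇η*(U)·G(U) > 0 for all U ∈ Ω \ {Ū}. Let K ⊆ Ω be compact. Then for every continuously differentiable η : Ω → ℝ with η(Ū) = 0 and ∇η(Ū) = 0 there exists a constant C_η ≥ 0 such that ∇(η + C_η η*)(U) · G(U) ≥ 0 for all U ∈ K. -/

import Mathlib

/-!
Near `Ubar` the quadratic bounds give `|∇η·G| ≤ (c₂/c₁) ∇η*·G`. On the rest of `K`, which is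
compact and avoids `Ubar`, `∇η·G` is bounded while `∇η*·G` is positive and lower semicontinuous
(for a differentiable convex `η*` it is locally a supremum of continuous difference quotients), so
it has a positive minimum; a large enough multiple of `η*` therefore dominates `η` there too.
-/

open Set Filter Topology

section

variable {E : Type*} [NormedAddCommGroup E] [NormedSpace ℝ E]

theorem ConvexOn.add_fderiv_apply_sub_le {s : Set E} {f : E → ℝ} {x y : E}
    (hf : ConvexOn ℝ s f) (hx : x ∈ s) (hy : y ∈ s) (hfx : DifferentiableAt ℝ f x) :
    f x + fderiv ℝ f x (y - x) ≤ f y := by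
  let ℓ : ℝ →ᵃ[ℝ] E := AffineMap.lineMap x y
  have hℓ0 : ℓ 0 = x := AffineMap.lineMap_apply_zero x y
  have hℓ1 : ℓ 1 = y := AffineMap.lineMap_apply_one x y
  have hderiv : HasDerivAt (f ∘ ℓ) (fderiv ℝ f x (y - x)) 0 := by
    refine HasFDerivAt.comp_hasDerivAt 0 ?_ AffineMap.hasDerivAt_lineMap
    rw [hℓ0]
    exact hfx.hasFDerivAt
  have hle := (hf.comp_affineMap ℓ).le_slope_of_hasDerivAt
    (show (0 : ℝ) ∈ ℓ ⁻¹' s by simp [hℓ0, hx]) (show (1 : ℝ) ∈ ℓ ⁻¹' s by simp [hℓ1, hy])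
    one_pos hderiv
  simp only [slope_def_field, Function.comp_apply, hℓ0, hℓ1, sub_zero, div_one] at hle
  linarith

theorem ConvexOn.div_sub_le_fderiv_apply {s : Set E} {f : E → ℝ} {x v : E} {t : ℝ}
    (hf : ConvexOn ℝ s f) (hx : x ∈ s) (hxt : x + t • v ∈ s) (ht : t < 0)
    (hfx : DifferentiableAt ℝ f x) :
    (f (x + t • v) - f x) / t ≤ fderiv ℝ f x v := by
  have h := hf.add_fderiv_apply_sub_le hx hxt hfx
  rw [add_sub_cancel_left, map_smul, smul_eq_mul] at h
  rw [div_le_iff_of_neg ht]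
  linarith

theorem DifferentiableAt.exists_neg_lt_div_sub {f : E → ℝ} {x v : E} {s : Set E} {y : ℝ}
    (hfx : DifferentiableAt ℝ f x) (hs : s ∈ 𝓝 x) (hy : y < fderiv ℝ f x v) :
    ∃ t < 0, x + t • v ∈ s ∧ y < (f (x + t • v) - f x) / t := by
  have hline : HasDerivAt (fun t : ℝ => x + t • v) v 0 := by
    simpa using ((hasDerivAt_id (0 : ℝ)).smul_const v).const_add x
  have hderiv : HasDerivAt (fun t : ℝ => f (x + t • v)) (fderiv ℝ f x v) 0 := by
    refine HasFDerivAt.comp_hasDerivAt (f := fun t : ℝ => x + t • v) 0 ?_ hline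
    simpa using hfx.hasFDerivAt
  have hslope : ∀ᶠ t in 𝓝[<] (0 : ℝ), y < slope (fun t : ℝ => f (x + t • v)) 0 t :=
    (hasDerivAt_iff_tendsto_slope.mp hderiv).mono_left (nhdsWithin_mono _ fun t ht => ne_of_lt ht)
      |>.eventually (eventually_gt_nhds hy)
  have hmem : ∀ᶠ t in 𝓝[<] (0 : ℝ), x + t • v ∈ s :=
    nhdsWithin_le_nhds (hline.continuousAt.eventually_mem (by simpa using hs))
  obtain ⟨t, hyt, hts, ht⟩ := (hslope.and (hmem.and self_mem_nhdsWithin)).exists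
  refine ⟨t, ht, hts, ?_⟩
  simpa [slope_def_field] using hyt

theorem ConvexOn.lowerSemicontinuousOn_fderiv_apply {s : Set E} {f : E → ℝ} {G : E → E}
    (hs : IsOpen s) (hf : ConvexOn ℝ s f) (hfd : DifferentiableOn ℝ f s)
    (hG : ContinuousOn G s) :
    LowerSemicontinuousOn (fun x => fderiv ℝ f x (G x)) s := by
  intro x hx y hy
  have hfx : DifferentiableAt ℝ f x := hfd.differentiableAt (hs.mem_nhds hx)
  obtain ⟨t, ht, hxt, hyt⟩ := hfx.exists_neg_lt_div_sub (hs.mem_nhds hx) hy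
  have hshift : ContinuousAt (fun z => z + t • G z) x :=
    continuousAt_id.add ((hG.continuousAt (hs.mem_nhds hx)).const_smul t)
  have hquot : ContinuousAt (fun z => (f (z + t • G z) - f z) / t) x :=
    ((ContinuousAt.comp (f := fun z => z + t • G z)
      (hfd.continuousOn.continuousAt (hs.mem_nhds hxt)) hshift).sub
      (hfd.continuousOn.continuousAt (hs.mem_nhds hx))).div_const t
  refine nhdsWithin_le_nhds ?_
  filter_upwards [hquot.eventually (eventually_gt_nhds hyt), hs.mem_nhds hx,
    hshift.eventually_mem (hs.mem_nhds hxt)] with z hyz hz hzt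
  exact hyz.trans_le (hf.div_sub_le_fderiv_apply hz hzt ht (hfd.differentiableAt (hs.mem_nhds hz)))

end

theorem IsCompact.exists_nonneg_add_mul_nonneg {α : Type*} [TopologicalSpace α] {s : Set α}
    (hs : IsCompact s) {φ ψ : α → ℝ} (hφ : LowerSemicontinuousOn φ s) (hφpos : ∀ x ∈ s, 0 < φ x)
    (hψ : LowerSemicontinuousOn ψ s) :
    ∃ C, 0 ≤ C ∧ ∀ x ∈ s, 0 ≤ ψ x + C * φ x := by
  rcases s.eq_empty_or_nonempty with rfl | hne
  · exact ⟨0, le_rfl, by simp⟩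
  obtain ⟨a, ha, hamin⟩ := hφ.exists_isMinOn hne hs
  obtain ⟨b, hb, hbmin⟩ := hψ.exists_isMinOn hne hs
  have hφa := hφpos a ha
  set M := max (-ψ b) 0
  refine ⟨M / φ a, by positivity, fun x hx => ?_⟩
  calc 0 ≤ ψ b + M := by linarith [le_max_left (-ψ b) 0]
    _ = ψ b + M / φ a * φ a := by rw [div_mul_cancel₀ M hφa.ne']
    _ ≤ ψ x + M / φ a * φ x := by gcongr; exacts [hbmin hx, hamin hx]

theorem dissipative_after_adding_multiple_of_entropy_general
    (Ω : Set (ℝ × ℝ)) (hΩopen : IsOpen Ω)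
    (ηs η : ℝ × ℝ → ℝ) (G : ℝ × ℝ → ℝ × ℝ) (Ubar : ℝ × ℝ)
    (hηs_conv : StrictConvexOn ℝ Ω ηs)
    (hηs_diff : DifferentiableOn ℝ ηs Ω)
    (hη_diff : ContDiffOn ℝ 1 η Ω)
    (hGcont : ContinuousOn G Ω)
    (hdiss : ∀ U ∈ Ω, U ≠ Ubar → 0 < fderiv ℝ ηs U (G U))
    (hquad : ∃ r > 0, ∃ c₁ > 0, ∃ c₂ > 0, ∀ U ∈ Ω, ‖U - Ubar‖ < r →
      c₁ * ‖U - Ubar‖ ^ 2 ≤ fderiv ℝ ηs U (G U) ∧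
      |fderiv ℝ η U (G U)| ≤ c₂ * ‖U - Ubar‖ ^ 2)
    (K : Set (ℝ × ℝ)) (hK : IsCompact K) (hKΩ : K ⊆ Ω) :
    ∃ C : ℝ, 0 ≤ C ∧ ∀ U ∈ K,
      0 ≤ fderiv ℝ η U (G U) + C * fderiv ℝ ηs U (G U) := by
  obtain ⟨r, hr, c₁, hc₁, c₂, -, hnear⟩ := hquad
  set far := K ∩ {U | r ≤ ‖U - Ubar‖}
  have hfar : IsCompact far := hK.inter_right (isClosed_le continuous_const (by fun_prop))
  have hfarΩ : far ⊆ Ω := inter_subset_left.trans hKΩ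
  have hfar_pos : ∀ U ∈ far, 0 < fderiv ℝ ηs U (G U) := fun U hU =>
    hdiss U (hfarΩ hU) (by rintro rfl; simp [far, hr.not_ge] at hU)
  obtain ⟨C, hC, hCfar⟩ := hfar.exists_nonneg_add_mul_nonneg
    ((hηs_conv.convexOn.lowerSemicontinuousOn_fderiv_apply hΩopen hηs_diff hGcont).mono hfarΩ)
    hfar_pos
    ((hη_diff.continuousOn_fderiv_of_isOpen hΩopen le_rfl).clm_apply hGcont
      |>.mono hfarΩ).lowerSemicontinuousOn
  refine ⟨max C (c₂ / c₁), le_max_of_le_left hC, fun U hU => ?_⟩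
  rcases lt_or_ge ‖U - Ubar‖ r with hUr | hUr
  · obtain ⟨hφ, hψ⟩ := hnear U (hKΩ hU) hUr
    calc 0 ≤ fderiv ℝ η U (G U) + c₂ * ‖U - Ubar‖ ^ 2 := by
          linarith [neg_abs_le (fderiv ℝ η U (G U))]
      _ = fderiv ℝ η U (G U) + c₂ / c₁ * (c₁ * ‖U - Ubar‖ ^ 2) := by field_simp
      _ ≤ _ := by gcongr; exact le_max_right _ _
  · calc 0 ≤ _ := hCfar U ⟨hU, hUr⟩
      _ ≤ _ := by gcongr; exacts [(hfar_pos U ⟨hU, hUr⟩).le, le_max_left _ _]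

/-- If `η*` is a strictly convex, strictly dissipative entropy with equilibrium `Ū`
(`η*(Ū) = 0`, `∇η*(Ū) = 0`, `∇η*·G > 0` off `Ū`), `G` is continuous with `G(Ū) = 0`,
and near `Ū` one has the quadratic bounds `∇η*·G ≥ c₁|U-Ū|²` and `|∇η·G| ≤ c₂|U-Ū|²`,
then for any normalized entropy `η` there is `C_η ≥ 0` making `η + C_η η*` dissipative
on a given compact `K ⊆ Ω`. -/
theorem dissipative_after_adding_multiple_of_entropy
    (Ω : Set (ℝ × ℝ)) (hΩopen : IsOpen Ω) (hΩconv : Convex ℝ Ω)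
    (ηs η : ℝ × ℝ → ℝ) (G : ℝ × ℝ → ℝ × ℝ) (Ubar : ℝ × ℝ) (hUbar : Ubar ∈ Ω)
    (hηs_conv : StrictConvexOn ℝ Ω ηs)
    (hηs_diff : DifferentiableOn ℝ ηs Ω)
    (hη_diff : ContDiffOn ℝ 1 η Ω)
    (hηs0 : ηs Ubar = 0) (hdηs0 : fderiv ℝ ηs Ubar = 0)
    (hη0 : η Ubar = 0) (hdη0 : fderiv ℝ η Ubar = 0)
    (hGcont : ContinuousOn G Ω) (hG0 : G Ubar = 0)
    (hdiss : ∀ U ∈ Ω, U ≠ Ubar → 0 < fderiv ℝ ηs U (G U))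
    (hquad : ∃ r > 0, ∃ c₁ > 0, ∃ c₂ > 0, ∀ U ∈ Ω, ‖U - Ubar‖ < r →
      c₁ * ‖U - Ubar‖ ^ 2 ≤ fderiv ℝ ηs U (G U) ∧
      |fderiv ℝ η U (G U)| ≤ c₂ * ‖U - Ubar‖ ^ 2)
    (K : Set (ℝ × ℝ)) (hK : IsCompact K) (hKΩ : K ⊆ Ω) :
    ∃ C : ℝ, 0 ≤ C ∧ ∀ U ∈ K,
      0 ≤ fderiv ℝ η U (G U) + C * fderiv ℝ ηs U (G U) :=
  dissipative_after_adding_multiple_of_entropy_general Ω hΩopen ηs η G Ubar hηs_conv hηs_diff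
    hη_diff hGcont hdiss hquad K hK hKΩ
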